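/- Let (M,d) be a compact metric space, f: M → M a continuous map, X a Banach space, and A: M → B(X) an α-Hölder continuous map (for some α > 0). Let η > 0 be such that ‖A(y)‖ ≤ e^{η} for every y ∈ M, and let θ > 0 and C_0 > 0 be given. Then for every γ with 0 < γ < αθ/(η + αθ) there exist ε_0 > 0 and C > 0 such that the following holds: for all n ∈ ℕ and all x, p ∈ M satisfying d(f^i(x), f^i(p)) ≤ C_0 e^{−θ(n−i)} for every i = 0, 1, …, n, one has ‖A^{⌊γn⌋}(x) − A^{⌊γn⌋}(p)‖ ≤ C e^{−ε_0 n}. -/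

import Mathlib

/-! Writing `A^m(x) − A^m(p)` as a telescoping sum of `m` terms, each the difference
`A(f^i x) − A(f^i p)` sandwiched between cocycle factors of norm at most `e^{η m}` in total,
gives `‖A^m(x) − A^m(p)‖ ≤ m e^{η m} max_{i<m} ‖A(f^i x) − A(f^i p)‖`. For `i < m = ⌊γ n⌋`,
Hölder continuity and the shadowing hypothesis bound each difference by
`C C₀^α e^{−αθ(n−m)}`. Since `m ≤ γ n`, the total exponent `η m − αθ(n − m)` is at most
`−(αθ − γ(η + αθ)) n`, which is negative exactly when `γ < αθ/(η + αθ)`; halving this rate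
absorbs the polynomial factor `m ≤ n`. -/

open Filter MeasureTheory Metric Topology Set

noncomputable section
namespace QCDS

variable {𝕜 : Type*} [RCLike 𝕜]
variable {X : Type*} [NormedAddCommGroup X] [NormedSpace 𝕜 X]
variable {M : Type*} [MetricSpace M]

def cocycle (f : M → M) (A : M → X →L[𝕜] X) : ℕ → M → X →L[𝕜] X
  | 0, _ => 1
  | n + 1, x => (cocycle f A n (f x)).comp (A x)

def IsHolder (A : M → X →L[𝕜] X) (α : ℝ) : Prop :=
  ∃ C > 0, ∀ x y : M, ‖A x - A y‖ ≤ C * dist x y ^ α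

def ClosingProperty (f : M → M) : Prop :=
  ∃ c > 0, ∃ θ > 0, ∃ l : ℕ, 0 < l ∧
    ∀ x : M, ∀ n : ℕ, ∃ j ≤ l, ∃ p : M, f^[n + j] p = p ∧
      ∀ i ≤ n, dist (f^[i] x) (f^[i] p) ≤
        c * Real.exp (-θ * min (i : ℝ) ((n : ℝ) - (i : ℝ))) * dist (f^[n] x) x

def icNorm (T : X →L[𝕜] X) : ℝ :=
  sInf { r : ℝ | 0 < r ∧ ∃ s : Finset X, ⇑T '' ball (0 : X) 1 ⊆ ⋃ c ∈ s, ball c r }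

def essSpecRadius (T : X →L[𝕜] X) : ℝ :=
  ⨅ m : ℕ, icNorm (T ^ (m + 1)) ^ (((m : ℝ) + 1)⁻¹)

def specRadius (T : X →L[𝕜] X) : ℝ :=
  ⨅ m : ℕ, ‖T ^ (m + 1)‖ ^ (((m : ℝ) + 1)⁻¹)

def IsQuasiCompactOp (T : X →L[𝕜] X) : Prop := essSpecRadius T < specRadius T

def algMult (T : X →L[𝕜] X) (γ : 𝕜) : Cardinal :=
  Module.rank 𝕜 ↥(⨆ j : ℕ, LinearMap.ker ((((T - γ • (1 : X →L[𝕜] X)) ^ j : X →L[𝕜] X) : X →ₗ[𝕜] X)))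

def HasExceptionalPrefix (T : X →L[𝕜] X) (m : ℕ) (lo hi : ℕ → ℝ) : Prop :=
  ∃ γ : Fin m → 𝕜,
    (∀ i : Fin m, lo i ≤ ‖γ i‖ ∧ ‖γ i‖ ≤ hi i) ∧
    (∀ i j : Fin m, i ≤ j → ‖γ j‖ ≤ ‖γ i‖) ∧
    (∀ i : Fin m, essSpecRadius T < ‖γ i‖) ∧
    (∀ i : Fin m, LinearMap.ker (((T - γ i • (1 : X →L[𝕜] X) : X →L[𝕜] X) : X →ₗ[𝕜] X)) ≠ ⊥) ∧
    (∀ z : 𝕜, ((Finset.univ.filter fun i => γ i = z).card : Cardinal) ≤ algMult T z) ∧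
    (∀ z : 𝕜, LinearMap.ker (((T - z • (1 : X →L[𝕜] X) : X →L[𝕜] X) : X →ₗ[𝕜] X)) ≠ ⊥ → essSpecRadius T < ‖z‖ →
      (∃ i : Fin m, ‖γ i‖ < ‖z‖) →
      ((Finset.univ.filter fun i => γ i = z).card : Cardinal) = algMult T z)

def ConstantPeriodicData (f : M → M) (A : M → X →L[𝕜] X) (m : ℕ) (lam : ℕ → ℝ) : Prop :=
  ∀ n : ℕ, 0 < n → ∀ p : M, f^[n] p = p →
    IsQuasiCompactOp (cocycle f A n p) ∧
    HasExceptionalPrefix (cocycle f A n p) m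
      (fun i => Real.exp (n * lam i)) (fun i => Real.exp (n * lam i))

def NarrowPeriodicData (f : M → M) (A : M → X →L[𝕜] X) (m : ℕ) (lam : ℕ → ℝ) (δ : ℝ) :
    Prop :=
  ∀ n : ℕ, 0 < n → ∀ p : M, f^[n] p = p →
    IsQuasiCompactOp (cocycle f A n p) ∧
    HasExceptionalPrefix (cocycle f A n p) m
      (fun i => Real.exp (n * (lam i - δ))) (fun i => Real.exp (n * (lam i + δ)))

def gelfand (T : X →L[𝕜] X) (q : ℕ) : ℝ :=
  sInf { r : ℝ | ∃ V : Submodule 𝕜 X, IsClosed (V : Set X) ∧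
    Module.rank 𝕜 (X ⧸ V) = ((q - 1 : ℕ) : Cardinal) ∧ r = ‖T.comp V.subtypeL‖ }

def DominatedPair (f : M → M) (A : M → X →L[𝕜] X) (E F : M → Submodule 𝕜 X) : Prop :=
  (∀ x, IsClosed (E x : Set X)) ∧ (∀ x, IsClosed (F x : Set X)) ∧
  (∀ x, IsCompl (E x) (F x)) ∧
  (∃ P : M → X →L[𝕜] X, Continuous P ∧ (∀ x, ∀ v ∈ E x, P x v = v) ∧
    (∀ x, ∀ v ∈ F x, P x v = 0)) ∧
  (∀ x, ∀ n : ℕ, 0 < n → Submodule.map (cocycle f A n x : X →ₗ[𝕜] X) (E x) = E (f^[n] x)) ∧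
  (∀ x, ∀ n : ℕ, 0 < n → Submodule.map (cocycle f A n x : X →ₗ[𝕜] X) (F x) ≤ F (f^[n] x)) ∧
  ∃ C > 0, ∃ τ : ℝ, 0 < τ ∧ τ < 1 ∧
    ∀ x, ∀ n : ℕ, 0 < n → ∀ u ∈ E x, ∀ v ∈ F x, ‖u‖ = 1 → ‖v‖ = 1 →
      ‖cocycle f A n x v‖ ≤ C * τ ^ n * ‖cocycle f A n x u‖

def DominatedSplitting (f : M → M) (A : M → X →L[𝕜] X) (k : ℕ) : Prop :=
  ∃ E F : M → Submodule 𝕜 X, DominatedPair f A E F ∧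
    ∀ x, Module.rank 𝕜 (E x) = (k : Cardinal)

def egr (a : ℕ → ℝ) (L : EReal) : Prop :=
  ∀ c : ℝ, ((c : EReal) < L → ∀ᶠ n : ℕ in atTop, Real.exp (c * n) ≤ a n) ∧
    (L < (c : EReal) → ∀ᶠ n : ℕ in atTop, a n ≤ Real.exp (c * n))

def KappaBoundedBy [MeasurableSpace M] (f : M → M) (A : M → X →L[𝕜] X) (β : ℝ) : Prop :=
  ∀ μ : Measure M, IsProbabilityMeasure μ → Ergodic f μ →
    ∀ᵐ x ∂μ, ∀ᶠ n : ℕ in atTop, icNorm (cocycle f A n x) ≤ Real.exp (β * n)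


section Volume

variable [NormedSpace ℝ X] [IsScalarTower ℝ 𝕜 X] [FiniteDimensional ℝ 𝕜]

open Classical in
/-- The determinant of `T` restricted to the finite-dimensional subspace `V`, defined as
the ratio of Haar measures `ν (T '' B_V) / ν (B_{T V})` on the image subspace `T V`
(and `0` if `T` is not injective on `V`). -/
def subdet (T : X →L[𝕜] X) (V : Submodule 𝕜 X) : ℝ :=
  if h : FiniteDimensional 𝕜 V ∧ Set.InjOn T (V : Set X) then
    haveI : FiniteDimensional 𝕜 V := h.1
    haveI : FiniteDimensional 𝕜 (V.map (T : X →ₗ[𝕜] X)) :=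
      Module.Finite.map V (T : X →ₗ[𝕜] X)
    haveI : FiniteDimensional ℝ (V.map (T : X →ₗ[𝕜] X)) :=
      Module.Finite.trans (R := ℝ) 𝕜 _
    letI : MeasurableSpace (V.map (T : X →ₗ[𝕜] X)) := borel _
    haveI : BorelSpace (V.map (T : X →ₗ[𝕜] X)) := ⟨rfl⟩
    let ν : Measure (V.map (T : X →ₗ[𝕜] X)) := (Module.finBasis ℝ _).addHaar
    (ν {w : V.map (T : X →ₗ[𝕜] X) | ∃ v ∈ V, ‖v‖ ≤ 1 ∧ (w : X) = T v} /
      ν (Metric.closedBall 0 1)).toReal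
  else 0

/-- The maximal `q`-dimensional volume growth `V_q(T)`. -/
def volGrowth (T : X →L[𝕜] X) (q : ℕ) : ℝ :=
  sSup { r : ℝ | ∃ V : Submodule 𝕜 X, Module.rank 𝕜 V = (q : Cardinal) ∧ r = subdet T V }

end Volume

end QCDS

open Real

namespace QCDS

section Cocycle

variable {𝕜 : Type*} [RCLike 𝕜] {X : Type*} [NormedAddCommGroup X] [NormedSpace 𝕜 X]
  {M : Type*} (f : M → M) (A : M → X →L[𝕜] X)

theorem norm_cocycle_le {K : ℝ} (hA : ∀ y, ‖A y‖ ≤ K) (m : ℕ) (x : M) :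
    ‖cocycle f A m x‖ ≤ K ^ m := by
  induction m generalizing x with
  | zero =>
    rw [cocycle, pow_zero, ContinuousLinearMap.one_def]
    exact ContinuousLinearMap.norm_id_le
  | succ m ih =>
    calc ‖cocycle f A (m + 1) x‖ ≤ ‖cocycle f A m (f x)‖ * ‖A x‖ :=
          ContinuousLinearMap.opNorm_comp_le _ _
      _ ≤ K ^ m * K := mul_le_mul (ih _) (hA x) (norm_nonneg _) ((norm_nonneg _).trans (ih x))
      _ = K ^ (m + 1) := (pow_succ K m).symm

theorem norm_cocycle_sub_le {K B : ℝ} (hK : 1 ≤ K) (hA : ∀ y, ‖A y‖ ≤ K) {m : ℕ} {x p : M}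
    (hB : ∀ i < m, ‖A (f^[i] x) - A (f^[i] p)‖ ≤ B) :
    ‖cocycle f A m x - cocycle f A m p‖ ≤ m * K ^ m * B := by
  induction m generalizing x p with
  | zero => simp [cocycle]
  | succ m ih =>
    have hB0 : 0 ≤ B := (norm_nonneg _).trans (hB 0 m.succ_pos)
    have hB_shift : ∀ i < m, ‖A (f^[i] (f x)) - A (f^[i] (f p))‖ ≤ B := fun i hi => by
      simpa only [Function.iterate_succ_apply] using hB (i + 1) (by omega)
    have hsplit : cocycle f A (m + 1) x - cocycle f A (m + 1) p =
        (cocycle f A m (f x) - cocycle f A m (f p)).comp (A x) +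
          (cocycle f A m (f p)).comp (A x - A p) := by
      simp only [cocycle, ContinuousLinearMap.sub_comp, ContinuousLinearMap.comp_sub]
      abel
    calc ‖cocycle f A (m + 1) x - cocycle f A (m + 1) p‖
        ≤ ‖cocycle f A m (f x) - cocycle f A m (f p)‖ * ‖A x‖ +
            ‖cocycle f A m (f p)‖ * ‖A x - A p‖ := by
          rw [hsplit]
          exact (norm_add_le _ _).trans (add_le_add (ContinuousLinearMap.opNorm_comp_le _ _)
            (ContinuousLinearMap.opNorm_comp_le _ _))
      _ ≤ m * K ^ m * B * K + K ^ m * B := by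
          gcongr
          · exact ih hB_shift
          · exact hA x
          · exact norm_cocycle_le f A hA m (f p)
          · simpa using hB 0 m.succ_pos
      _ = m * K ^ (m + 1) * B + K ^ m * B := by ring
      _ ≤ m * K ^ (m + 1) * B + K ^ (m + 1) * B := by
          gcongr
          omega
      _ = (m + 1 : ℕ) * K ^ (m + 1) * B := by push_cast; ring

end Cocycle

theorem norm_sub_le_of_shadowing {𝕜 : Type*} [RCLike 𝕜] {X : Type*} [NormedAddCommGroup X]
    [NormedSpace 𝕜 X] {M : Type*} [MetricSpace M] {f : M → M} {A : M → X →L[𝕜] X}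
    {α θ C₀ CH : ℝ} (hα : 0 ≤ α) (hθ : 0 ≤ θ) (hC₀ : 0 ≤ C₀) (hCH : 0 ≤ CH)
    (hHol : ∀ x y, ‖A x - A y‖ ≤ CH * dist x y ^ α) {n m : ℕ} (hmn : m ≤ n) {x p : M}
    (hd : ∀ i ≤ n, dist (f^[i] x) (f^[i] p) ≤ C₀ * exp (-θ * ((n : ℝ) - i))) :
    ∀ i < m, ‖A (f^[i] x) - A (f^[i] p)‖ ≤ CH * C₀ ^ α * exp (-(α * θ) * ((n : ℝ) - m)) := by
  intro i hi
  have him : (i : ℝ) ≤ m := by exact_mod_cast hi.le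
  calc ‖A (f^[i] x) - A (f^[i] p)‖ ≤ CH * (C₀ * exp (-θ * ((n : ℝ) - i))) ^ α := by
        grw [hHol, hd i (by omega)]
    _ = CH * C₀ ^ α * exp (-(α * θ) * ((n : ℝ) - i)) := by
        rw [mul_rpow hC₀ (exp_nonneg _), ← exp_mul]
        ring_nf
    _ ≤ CH * C₀ ^ α * exp (-(α * θ) * ((n : ℝ) - m)) := by
        refine mul_le_mul_of_nonneg_left (exp_le_exp.mpr ?_) (by positivity)
        nlinarith [mul_nonneg (mul_nonneg hα hθ) (sub_nonneg.mpr him)]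

theorem mul_exp_neg_two_mul_le {ε : ℝ} (hε : 0 < ε) (t : ℝ) :
    t * exp (-(2 * ε) * t) ≤ exp (-ε * t) / ε := by
  have ht : t ≤ exp (ε * t) / ε := by
    rw [le_div_iff₀ hε]
    linarith [add_one_le_exp (ε * t)]
  calc t * exp (-(2 * ε) * t) ≤ exp (ε * t) / ε * exp (-(2 * ε) * t) := by gcongr
    _ = exp (-ε * t) / ε := by rw [div_mul_eq_mul_div, ← exp_add]; ring_nf

theorem cocycle_close_of_shadowing_general
    {M : Type*} [MetricSpace M]
    {X : Type*} [NormedAddCommGroup X] [NormedSpace ℝ X]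
    (f : M → M)
    (A : M → X →L[ℝ] X) (α : ℝ) (hα : 0 < α) (hA : IsHolder A α)
    (η : ℝ) (hη : 0 < η) (hbound : ∀ y : M, ‖A y‖ ≤ Real.exp η)
    (θ : ℝ) (hθ : 0 < θ) (C₀ : ℝ) (hC₀ : 0 < C₀)
    (γ : ℝ) (hγ0 : 0 < γ) (hγ : γ < α * θ / (η + α * θ)) :
    ∃ ε₀ > 0, ∃ C > 0, ∀ n : ℕ, ∀ x p : M,
      (∀ i : ℕ, i ≤ n → dist (f^[i] x) (f^[i] p) ≤ C₀ * Real.exp (-θ * ((n : ℝ) - i))) →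
      ‖cocycle f A ⌊γ * (n : ℝ)⌋₊ x - cocycle f A ⌊γ * (n : ℝ)⌋₊ p‖ ≤
        C * Real.exp (-ε₀ * n) := by
  obtain ⟨CH, hCH, hHol⟩ := hA
  have hηθ : 0 < η + α * θ := by positivity
  have hγ' : γ * (η + α * θ) < α * θ := (lt_div_iff₀ hηθ).mp hγ
  have hγ1 : γ < 1 := hγ.trans ((div_lt_one hηθ).mpr (by linarith))
  set ε := (α * θ - γ * (η + α * θ)) / 2 with hε
  have hε0 : 0 < ε := by linarith
  refine ⟨ε, hε0, CH * C₀ ^ α / ε, by positivity, fun n x p hd => ?_⟩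
  set m := ⌊γ * (n : ℝ)⌋₊
  have hm : (m : ℝ) ≤ γ * n := Nat.floor_le (by positivity)
  have hmn : (m : ℝ) ≤ n := hm.trans (by nlinarith [(n.cast_nonneg : (0 : ℝ) ≤ n)])
  have hB := norm_sub_le_of_shadowing hα.le hθ.le hC₀.le hCH.le hHol (by exact_mod_cast hmn) hd
  calc ‖cocycle f A m x - cocycle f A m p‖
      ≤ m * exp η ^ m * (CH * C₀ ^ α * exp (-(α * θ) * ((n : ℝ) - m))) :=
        norm_cocycle_sub_le f A (one_le_exp hη.le) hbound hB
    _ = CH * C₀ ^ α * (m * exp ((η + α * θ) * m - α * θ * n)) := by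
        rw [← exp_nat_mul, show (η + α * θ) * m - α * θ * n = m * η + -(α * θ) * (n - m) by ring,
          exp_add]
        ring
    _ ≤ CH * C₀ ^ α * (n * exp (-(2 * ε) * n)) := by
        gcongr
        nlinarith
    _ ≤ CH * C₀ ^ α * (exp (-ε * n) / ε) := by gcongr; exact mul_exp_neg_two_mul_le hε0 n
    _ = CH * C₀ ^ α / ε * exp (-ε * n) := by ring

/-- **Exponential closeness of cocycles along exponentially shadowed orbit segments.** If `A`
is `α`-Hölder with `‖A(y)‖ ≤ e^η` on `M`, then for every `0 < γ < αθ/(η + αθ)` there are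
`ε₀ > 0` and `C > 0` such that whenever the orbit segments of `x` and `p` satisfy
`d(f^i(x), f^i(p)) ≤ C₀ e^{−θ(n−i)}` for `0 ≤ i ≤ n`, one has
`‖A^{⌊γn⌋}(x) − A^{⌊γn⌋}(p)‖ ≤ C e^{−ε₀ n}`. -/
theorem cocycle_close_of_shadowing
    {M : Type*} [MetricSpace M] [CompactSpace M]
    {X : Type*} [NormedAddCommGroup X] [NormedSpace ℝ X] [CompleteSpace X]
    (f : M → M) (hf : Continuous f)
    (A : M → X →L[ℝ] X) (α : ℝ) (hα : 0 < α) (hA : IsHolder A α)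
    (η : ℝ) (hη : 0 < η) (hbound : ∀ y : M, ‖A y‖ ≤ Real.exp η)
    (θ : ℝ) (hθ : 0 < θ) (C₀ : ℝ) (hC₀ : 0 < C₀)
    (γ : ℝ) (hγ0 : 0 < γ) (hγ : γ < α * θ / (η + α * θ)) :
    ∃ ε₀ > 0, ∃ C > 0, ∀ n : ℕ, ∀ x p : M,
      (∀ i : ℕ, i ≤ n → dist (f^[i] x) (f^[i] p) ≤ C₀ * Real.exp (-θ * ((n : ℝ) - i))) →
      ‖cocycle f A ⌊γ * (n : ℝ)⌋₊ x - cocycle f A ⌊γ * (n : ℝ)⌋₊ p‖ ≤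
        C * Real.exp (-ε₀ * n) :=
  cocycle_close_of_shadowing_general f A α hα hA η hη hbound θ hθ C₀ hC₀ γ hγ0 hγ

end QCDS
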